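/- Consider the finite program over atoms {p(a), q(a), r, b, c}: 'p(1) ← agg, b' where agg is the condition |{x ∈ {0,1} : p(x) ∈ S}| ≠ 1, together with the disjunctive fact 'b or c'. Under the A-log semantics — the reduct w.r.t. S deletes the first rule if |{x : p(x)∈S}| = 1 and otherwise replaces agg by the atoms {p(x) : p(x)∈S}; the disjunctive fact's reduct is itself; S is an answer set iff S is a minimal model of the reduct — the set {c} is an answer set, while {b, p(1)} is not an answer set (even though {b,p(1)} is a minimal set satisfying both rules when agg is evaluated directly in the set). -/

import Mathlib

inductive At | p0 | p1 | b | c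
deriving DecidableEq

open At

/-- The atoms p(0), p(1) indexed by terms 0,1. -/
def pat : Fin 2 → At := fun x => if x = 0 then p0 else p1

/-- The aggregate condition of the first rule: |{x : p(x) ∈ S}| ≠ 1. -/
def aggCond (S : Set At) : Prop := Set.ncard {x : Fin 2 | pat x ∈ S} ≠ 1

/-- M is a model of the reduct of the program w.r.t. S.  The disjunctive fact
`b or c` stays; the rule `p(1) ← agg, b` is deleted if |{x : p(x) ∈ S}| = 1 and
otherwise its aggregate is replaced by the atoms {p(x) : p(x) ∈ S}. -/
def ModelOfReduct (S M : Set At) : Prop :=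
  (b ∈ M ∨ c ∈ M) ∧
  (aggCond S → ((∀ x : Fin 2, pat x ∈ S → pat x ∈ M) ∧ b ∈ M) → p1 ∈ M)

/-- S is an answer set iff S is a minimal model of the reduct w.r.t. S. -/
def AnswerSet (S : Set At) : Prop :=
  ModelOfReduct S S ∧ ∀ M : Set At, ModelOfReduct S M → M ⊆ S → M = S

/-- Direct satisfaction of the two rules, evaluating the aggregate in the set
itself. -/
def DirSat (S : Set At) : Prop :=
  (b ∈ S ∨ c ∈ S) ∧ (aggCond S ∧ b ∈ S → p1 ∈ S)

lemma aggCond_of_forall_pat_not_mem {S : Set At} (h : ∀ x, pat x ∉ S) : aggCond S := by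
  have hempty : {x : Fin 2 | pat x ∈ S} = ∅ := Set.eq_empty_of_forall_notMem h
  simp [aggCond, hempty]

lemma not_aggCond_b_p1 : ¬ aggCond {b, p1} := by
  have hone : {x : Fin 2 | pat x ∈ ({b, p1} : Set At)} = {1} := by
    ext x; fin_cases x <;> simp [pat]
  rw [aggCond, hone]
  simp

lemma modelOfReduct_iff_of_not_aggCond {S : Set At} (h : ¬ aggCond S) (M : Set At) :
    ModelOfReduct S M ↔ b ∈ M ∨ c ∈ M := by
  simp [ModelOfReduct, h]

lemma answerSet_c : AnswerSet {c} := by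
  refine ⟨⟨Or.inr rfl, fun _ ⟨_, hb⟩ => by simp at hb⟩, fun M hM hsub => ?_⟩
  have hc : c ∈ M := hM.1.resolve_left fun hb => absurd (hsub hb) (by simp)
  exact hsub.antisymm (Set.singleton_subset_iff.2 hc)

-- `{b}` is a model of the reduct, in which the rule for `p(1)` has been deleted.
lemma not_answerSet_b_p1 : ¬ AnswerSet {b, p1} := by
  rintro ⟨-, hmin⟩
  have hb : ModelOfReduct {b, p1} {b} :=
    (modelOfReduct_iff_of_not_aggCond not_aggCond_b_p1 _).2 (Or.inl rfl)
  have hp1 : p1 ∈ ({b} : Set At) := (hmin {b} hb (by simp)) ▸ (by simp)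
  simp at hp1

lemma dirSat_b_p1 : DirSat {b, p1} := ⟨Or.inl (by simp), fun _ => by simp⟩

-- Dropping `p(1)` empties `{x | p(x) ∈ M}`, which makes the aggregate true and forces `p(1)` back.
lemma eq_b_p1_of_dirSat_of_subset {M : Set At} (hsub : M ⊆ {b, p1}) (hM : DirSat M) :
    M = {b, p1} := by
  obtain ⟨hbc, hrule⟩ := hM
  have hb : b ∈ M := hbc.resolve_right fun hc => absurd (hsub hc) (by simp)
  have hp1 : p1 ∈ M := by
    by_contra hp1
    refine hp1 (hrule ⟨aggCond_of_forall_pat_not_mem fun x hx => ?_, hb⟩)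
    fin_cases x
    · exact absurd (hsub hx) (by simp [pat])
    · exact hp1 hx
  exact hsub.antisymm (Set.insert_subset hb (Set.singleton_subset_iff.2 hp1))

theorem alog_flog_difference :
    AnswerSet {c} ∧
    ¬ AnswerSet {b, p1} ∧
    DirSat {b, p1} ∧
    (∀ M : Set At, M ⊆ {b, p1} → DirSat M → M = {b, p1}) :=
  ⟨answerSet_c, not_answerSet_b_p1, dirSat_b_p1, fun _ => eq_b_p1_of_dirSat_of_subset⟩
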